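/- Let n ≥ 3 be an integer, m = n − 1, and suppose 1/(2m) < ρ < 1/(m+1). Then there is no solution (x, y) of the system (S_ρ) on all of ℝ such that x′(t) < 0 and 0 < x(t) < 1 for every t ∈ ℝ and (x(t), y(t)) → (1, 0) as t → −∞. -/

import Mathlib

/-!
Write `N = 1 - 2mρ` and `k = 1 + m - 4mρ`. In the range `1/(2m) < ρ < 1/(m+1)` we have `N < 0`,
`k > 0` and `1 - (m+1)ρ > 0`, so the second equation forces `y′ > 0` wherever `y < 0`; as `y → 0`
at `-∞`, this keeps `y ≥ 0` on all of `ℝ`. The combination `L = y + k·x` eliminates the `x·y`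
terms: `L′ = (m-1)·N·(1 - x²) < 0`, and since `x` decreases, `1 - x²` is bounded away from `0` on
`[0, ∞)`. Hence `L` decreases at least linearly and becomes negative, contradicting `x, y ≥ 0`.
-/

/-- `IsEinsteinSystemSol m ρ x y` means the pair of differentiable functions `(x, y)` solves
the planar system `(S_ρ)`:
`(1 − 2mρ)·x′ = (m−1)(1−mρ)(1 − x²) − x·y` and
`(1 − 2mρ)·y′ = −m(m−1)(1−(m+1)ρ)(1 − x²) + (1 + m − 4mρ)·x·y`,
arising from rotationally symmetric gradient steady ρ-Einstein solitons. -/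
def IsEinsteinSystemSol (m ρ : ℝ) (x y : ℝ → ℝ) : Prop :=
  Differentiable ℝ x ∧ Differentiable ℝ y ∧
    (∀ t : ℝ, (1 - 2 * m * ρ) * deriv x t =
      (m - 1) * (1 - m * ρ) * (1 - x t ^ 2) - x t * y t) ∧
    (∀ t : ℝ, (1 - 2 * m * ρ) * deriv y t =
      -(m * (m - 1) * (1 - (m + 1) * ρ) * (1 - x t ^ 2)) + (1 + m - 4 * m * ρ) * x t * y t)

open Filter Set Topology

theorem tendsto_atTop_atBot_of_deriv_le_neg {f : ℝ → ℝ} (hf : Differentiable ℝ f) {a c : ℝ}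
    (hc : 0 < c) (hf' : ∀ t, a ≤ t → deriv f t ≤ -c) : Tendsto f atTop atBot := by
  have hlin : Tendsto (fun t => f a - c * (t - a)) atTop atBot :=
    tendsto_atBot_add_const_left _ _ <| tendsto_neg_atTop_atBot.comp <|
      (tendsto_atTop_add_const_right _ _ tendsto_id).const_mul_atTop hc
  refine tendsto_atBot_mono' _ ?_ hlin
  filter_upwards [eventually_ge_atTop a] with t ht
  have := (convex_Ici a).image_sub_le_mul_sub_of_deriv_le hf.continuous.continuousOn
    hf.differentiableOn (fun s hs => hf' s (interior_subset hs)) a self_mem_Ici t ht ht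
  linarith

theorem nonneg_of_tendsto_atBot_zero_of_deriv_pos_of_neg {y : ℝ → ℝ} (hy : Continuous y)
    (hlim : Tendsto y atBot (𝓝 0)) (hy' : ∀ t, y t < 0 → 0 < deriv y t) (t : ℝ) :
    0 ≤ y t := by
  by_contra! ht
  obtain ⟨s, hst, hs⟩ : ∃ s, s ≤ t ∧ y t / 2 < y s :=
    ((eventually_le_atBot t).and (hlim.eventually (lt_mem_nhds (by linarith)))).exists
  have hK : IsCompact {u ∈ Icc s t | y t / 2 ≤ y u} :=
    isCompact_Icc.inter_right (isClosed_le continuous_const hy)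
  -- `p` is the last time before `t` at which `y ≥ y t / 2`; after it `y` is negative, so increasing.
  obtain ⟨p, ⟨⟨hsp, hpt⟩, hyp⟩, hp_max⟩ := hK.exists_isGreatest ⟨s, ⟨le_rfl, hst⟩, hs.le⟩
  have hneg : ∀ u ∈ Ioc p t, y u < y t / 2 := fun u hu => by
    by_contra! h
    exact (hp_max ⟨⟨hsp.trans hu.1.le, hu.2⟩, h⟩).not_gt hu.1
  have hpt' : p < t := hpt.lt_of_ne (by rintro rfl; linarith)
  have hmono : StrictMonoOn y (Icc p t) := by
    refine strictMonoOn_of_deriv_pos (convex_Icc p t) hy.continuousOn fun u hu => hy' u ?_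
    rw [interior_Icc] at hu
    linarith [hneg u (Ioo_subset_Ioc_self hu)]
  linarith [hmono (left_mem_Icc.2 hpt) (right_mem_Icc.2 hpt) hpt']

namespace IsEinsteinSystemSol

variable {m ρ : ℝ} {x y : ℝ → ℝ}

theorem deriv_snd_pos (h : IsEinsteinSystemSol m ρ x y) (hN : 1 - 2 * m * ρ < 0)
    (hB : 0 < m * (m - 1) * (1 - (m + 1) * ρ)) (hk : 0 < 1 + m - 4 * m * ρ) {t : ℝ}
    (hx₀ : 0 < x t) (hx₁ : x t < 1) (hy : y t < 0) : 0 < deriv y t := by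
  have hrhs : (1 - 2 * m * ρ) * deriv y t < 0 := by
    rw [h.2.2.2 t]
    have h₁ : 0 < m * (m - 1) * (1 - (m + 1) * ρ) * (1 - x t ^ 2) :=
      mul_pos hB (by nlinarith)
    have h₂ : (1 + m - 4 * m * ρ) * x t * y t < 0 := mul_neg_of_pos_of_neg (mul_pos hk hx₀) hy
    linarith
  exact pos_of_mul_neg_right hrhs hN.le

theorem hasDerivAt_lyapunov (h : IsEinsteinSystemSol m ρ x y) (hN : 1 - 2 * m * ρ ≠ 0) (t : ℝ) :
    HasDerivAt (fun t => y t + (1 + m - 4 * m * ρ) * x t)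
      ((m - 1) * (1 - 2 * m * ρ) * (1 - x t ^ 2)) t := by
  refine ((h.2.1 t).hasDerivAt.add ((h.1 t).hasDerivAt.const_mul _)).congr_deriv ?_
  refine mul_left_cancel₀ hN ?_
  linear_combination h.2.2.2 t + (1 + m - 4 * m * ρ) * h.2.2.1 t

end IsEinsteinSystemSol

/-- Case 4 of Theorem 4.2: for `1/(2m) < ρ < 1/(m+1)` there is no global trajectory of the
system `(S_ρ)` with `x′ < 0`, `0 < x < 1` emanating from the equilibrium `(1,0)` at `t = -∞`. -/
theorem no_steady_soliton_trajectory_case4 (n : ℕ) (hn : 3 ≤ n) (m ρ : ℝ)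
    (hm : m = (n : ℝ) - 1) (hρ1 : 1 / (2 * m) < ρ) (hρ2 : ρ < 1 / (m + 1)) :
    ¬ ∃ x y : ℝ → ℝ, IsEinsteinSystemSol m ρ x y ∧
      (∀ t : ℝ, deriv x t < 0) ∧ (∀ t : ℝ, 0 < x t ∧ x t < 1) ∧
      Filter.Tendsto (fun t => (x t, y t)) Filter.atBot (nhds (1, 0)) := by
  rintro ⟨x, y, hsol, hx', hx, hlim⟩
  have hm1 : 1 < m := by rw [hm]; linarith [show (3 : ℝ) ≤ n by exact_mod_cast hn]
  have hN : 1 - 2 * m * ρ < 0 := by rw [div_lt_iff₀ (by positivity)] at hρ1; linarith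
  have hρm : (m + 1) * ρ < 1 := by rw [lt_div_iff₀ (by positivity)] at hρ2; linarith
  have hk : 0 < 1 + m - 4 * m * ρ := by nlinarith [sq_nonneg (m - 1)]
  have hB : 0 < m * (m - 1) * (1 - (m + 1) * ρ) := by
    apply mul_pos (mul_pos _ _) <;> linarith
  have hy : ∀ t, 0 ≤ y t := nonneg_of_tendsto_atBot_zero_of_deriv_pos_of_neg hsol.2.1.continuous
    hlim.snd_nhds fun t => hsol.deriv_snd_pos hN hB hk (hx t).1 (hx t).2
  have hL := hsol.hasDerivAt_lyapunov hN.ne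
  have hc : 0 < (m - 1) * (2 * m * ρ - 1) * (1 - x 0 ^ 2) :=
    mul_pos (mul_pos (by linarith) (by linarith)) (by nlinarith [hx 0])
  have hL' : ∀ t, 0 ≤ t → deriv (fun t => y t + (1 + m - 4 * m * ρ) * x t) t ≤
      -((m - 1) * (2 * m * ρ - 1) * (1 - x 0 ^ 2)) := fun t ht => by
    have hxt : x t ^ 2 ≤ x 0 ^ 2 :=
      pow_le_pow_left₀ (hx t).1.le ((strictAnti_of_deriv_neg hx').antitone ht) 2
    rw [(hL t).deriv]
    nlinarith [mul_le_mul_of_nonneg_left hxt (by nlinarith : 0 ≤ (m - 1) * (2 * m * ρ - 1))]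
  obtain ⟨t, ht⟩ := ((tendsto_atTop_atBot_of_deriv_le_neg (fun t => (hL t).differentiableAt) hc
    hL').eventually_lt_atBot 0).exists
  linarith [hy t, mul_pos hk (hx t).1]
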